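/- Let T, T', T'' be finite connected preorders and suppose the set C' = { v̄ : v ∈ min(T''), T ≅ T' ↘_v T'' } of bags is nonempty. Then all bags in C' have the same cardinality, say n, and ⟨δ(T), T' ⊗ T''⟩ = (1/(n·|min(T)|)) ⟨T, T' ▷ T''⟩, where T' ▷ T'' := Σ_{v ∈ min(T'')} T' ↘_v T''. -/

import Mathlib

open scoped Classical

/-- A finite preorder (quasi-order, i.e. finite topological space) on a subset
(`carrier`) of an ambient type `α`. -/
structure FinPre (α : Type*) where
  carrier : Finset α
  le : α → α → Prop
  mem_of_le : ∀ ⦃x y⦄, le x y → x ∈ carrier ∧ y ∈ carrier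
  le_refl : ∀ x ∈ carrier, le x x
  le_trans : ∀ ⦃x y z⦄, le x y → le y z → le x z

namespace FinPre

variable {α : Type*} [DecidableEq α]

/-- The strict relation `x < y`, i.e. `x ≤ y` and not `y ≤ x`. -/
def lt (T : FinPre α) (x y : α) : Prop := T.le x y ∧ ¬ T.le y x

/-- The equivalence `x ~ y` iff `x ≤ y` and `y ≤ x`. -/
def equiv (T : FinPre α) (x y : α) : Prop := T.le x y ∧ T.le y x

/-- The bag (equivalence class) of a vertex `v`. -/
noncomputable def bag (T : FinPre α) (v : α) : Finset α :=
  T.carrier.filter (fun x => T.equiv x v)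

/-- `min(T)`: the set of minimal elements (`y ≤ x` implies `x ≤ y`). -/
noncomputable def minSet (T : FinPre α) : Finset α :=
  T.carrier.filter (fun x => ∀ y, T.le y x → T.le x y)

/-- Connectivity of a subset `S`, for the graph with edges between comparable pairs. -/
def ConnOn (T : FinPre α) (S : Set α) : Prop :=
  ∀ x ∈ S, ∀ y ∈ S,
    Relation.ReflTransGen (fun a b => a ∈ S ∧ b ∈ S ∧ (T.le a b ∨ T.le b a)) x y

/-- A finite preorder is connected if it is nonempty and any two elements are linked by
a chain of comparable pairs. -/
def Connected (T : FinPre α) : Prop :=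
  T.carrier.Nonempty ∧ T.ConnOn ↑T.carrier

/-- `I` is a connected component of `S` (for the comparability graph of `T`). -/
def IsCC (T : FinPre α) (S I : Set α) : Prop :=
  I.Nonempty ∧ I ⊆ S ∧ T.ConnOn I ∧
    ∀ x ∈ I, ∀ y ∈ S, (T.le x y ∨ T.le y x) → y ∈ I

/-- `Y_- = {x ∉ Y : ∃ y ∈ Y, x ≤ y}`. -/
noncomputable def below (T : FinPre α) (Y : Finset α) : Finset α :=
  (T.carrier \ Y).filter (fun x => ∃ y ∈ Y, T.le x y)

/-- `Y ◎ T` : `Y` is an upper (open) set, the image of `Y_-` in the quotient poset `T̄`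
is a single bag belonging to `min(T̄)` (i.e. `Y_-` is nonempty, contained in the bag of
some minimal `w`), and `Y` is a connected component of
`{x : y < x for all y ∈ Y_-}`. -/
def Circ (T : FinPre α) (Y : Finset α) : Prop :=
  (∀ x ∈ Y, ∀ z, T.le x z → z ∈ Y) ∧
  ∃ w ∈ T.below Y, w ∈ T.minSet ∧ (∀ x ∈ T.below Y, T.equiv x w) ∧
    T.IsCC {x | x ∈ T.carrier ∧ ∀ y ∈ T.below Y, T.lt y x} ↑Y

/-- The induced (restricted) preorder on a subset `S`. -/
def restrict (T : FinPre α) (S : Finset α) : FinPre α where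
  carrier := T.carrier ∩ S
  le x y := T.le x y ∧ x ∈ S ∧ y ∈ S
  mem_of_le := by
    intro x y h
    rcases T.mem_of_le h.1 with ⟨hx, hy⟩
    exact ⟨Finset.mem_inter.2 ⟨hx, h.2.1⟩, Finset.mem_inter.2 ⟨hy, h.2.2⟩⟩
  le_refl := by
    intro x hx
    rcases Finset.mem_inter.1 hx with ⟨h1, h2⟩
    exact ⟨T.le_refl x h1, h2, h2⟩
  le_trans := by
    rintro x y z ⟨h1, hx, hy⟩ ⟨h2, _, hz⟩
    exact ⟨T.le_trans h1 h2, hx, hz⟩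

/-- The grafting `T' ↘_v T''` of `T'` above the vertex `v` of `T''` (auxiliary version,
with the disjointness hypotheses as arguments). -/
def graftAux (T' T'' : FinPre α) (v : α) (hd : Disjoint T'.carrier T''.carrier)
    (hv : v ∈ T''.carrier) : FinPre α where
  carrier := T'.carrier ∪ T''.carrier
  le x y := T'.le x y ∨ T''.le x y ∨ (T''.le x v ∧ y ∈ T'.carrier)
  mem_of_le := by
    rintro x y (h | h | ⟨h1, h2⟩)
    · rcases T'.mem_of_le h with ⟨hx, hy⟩
      exact ⟨Finset.mem_union_left _ hx, Finset.mem_union_left _ hy⟩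
    · rcases T''.mem_of_le h with ⟨hx, hy⟩
      exact ⟨Finset.mem_union_right _ hx, Finset.mem_union_right _ hy⟩
    · exact ⟨Finset.mem_union_right _ (T''.mem_of_le h1).1, Finset.mem_union_left _ h2⟩
  le_refl := by
    intro x hx
    rcases Finset.mem_union.1 hx with h | h
    · exact Or.inl (T'.le_refl x h)
    · exact Or.inr (Or.inl (T''.le_refl x h))
  le_trans := by
    rintro x y z (h1 | h1 | ⟨h1, h1'⟩) (h2 | h2 | ⟨h2, h2'⟩)
    · exact Or.inl (T'.le_trans h1 h2)
    · exact absurd (T''.mem_of_le h2).1 (Finset.disjoint_left.1 hd (T'.mem_of_le h1).2)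
    · exact absurd (T''.mem_of_le h2).1 (Finset.disjoint_left.1 hd (T'.mem_of_le h1).2)
    · exact absurd (T'.mem_of_le h2).1 (Finset.disjoint_right.1 hd (T''.mem_of_le h1).2)
    · exact Or.inr (Or.inl (T''.le_trans h1 h2))
    · exact Or.inr (Or.inr ⟨T''.le_trans h1 h2, h2'⟩)
    · exact Or.inr (Or.inr ⟨h1, (T'.mem_of_le h2).2⟩)
    · exact absurd (T''.mem_of_le h2).1 (Finset.disjoint_left.1 hd h1')
    · exact absurd (T''.mem_of_le h2).1 (Finset.disjoint_left.1 hd h1')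

/-- The grafting `T' ↘_v T''` of `T'` above the vertex `v` of `T''`: the preorder on
`X₁ ⊔ X₂` restricting to `T'` on `X₁` and to `T''` on `X₂`, with `q ≤ p` for `q ∈ X₂`,
`p ∈ X₁` iff `q ≤_{T''} v`.  (Junk value when the carriers are not disjoint or
`v ∉ T''`.) -/
noncomputable def graft (T' T'' : FinPre α) (v : α) : FinPre α :=
  if h : Disjoint T'.carrier T''.carrier ∧ v ∈ T''.carrier then
    T'.graftAux T'' v h.1 h.2 else T'

/-- The set of subsets `Y` of the carrier with `Y ◎ T`. -/
noncomputable def circSet (T : FinPre α) : Finset (Finset α) :=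
  T.carrier.powerset.filter (fun Y => T.Circ Y)

/-- Isomorphisms from `A` to `B` (bijections order-preserving in both directions),
encoded as maps `α → α` that are the identity outside of the carrier of `A`. -/
def Isos (A B : FinPre α) : Set (α → α) :=
  {f | Set.BijOn f ↑A.carrier ↑B.carrier ∧
    (∀ x ∈ A.carrier, ∀ y ∈ A.carrier, (A.le x y ↔ B.le (f x) (f y))) ∧
    ∀ x, x ∉ A.carrier → f x = x}

/-- `⟨A, B⟩`: the number of isomorphisms from `A` to `B`. -/
noncomputable def pairing (A B : FinPre α) : ℕ := Nat.card ↥(Isos A B)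

/-- The NAP coproduct `δ(T) = (1/|min(T)|) Σ_{Y ◎ T} T|_Y ⊗ T|_{X \ Y}`, with values
in the rational vector space spanned by pairs of finite preorders. -/
noncomputable def delta (T : FinPre α) : (FinPre α × FinPre α) →₀ ℚ :=
  ((T.minSet.card : ℚ))⁻¹ • ∑ Y ∈ T.circSet,
    Finsupp.single (T.restrict Y, T.restrict (T.carrier \ Y)) (1 : ℚ)

end FinPre

/-!
An isomorphism `f : T ≅ T' ↘_v T''` with `v ∈ min(T'')` splits along `Y = f⁻¹(T')`: since
`T' ◎ T' ↘_v T''` and `◎` is invariant under isomorphism, `Y ◎ T`, and `f` restricts to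
isomorphisms `g : T|_Y ≅ T'` and `h : T|_{X∖Y} ≅ T''`. Conversely, for `Y ◎ T` and such `g`
and `h`, the glued map is an isomorphism onto `T' ↘_v T''` exactly when `v` lies in the bag of
`h w`, for any `w ∈ Y_-`. Hence `∑_v ⟨T, T' ↘_v T''⟩ = ∑_{Y ◎ T} ∑_{g, h} |bag(h w)|`.

All bags in `C'` have the same size: the pairs `x ≤ y` of `T' ↘_v T''` are those of `T'`, those
of `T''` and those of `v̄ × T'`, so `|v̄| · |T'|` is determined by `T`, `T'` and `T''`.
-/

namespace FinPre

variable {α : Type*}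

section Basic

variable {S T : FinPre α}

lemma mem_minSet {x : α} : x ∈ S.minSet ↔ x ∈ S.carrier ∧ ∀ y, S.le y x → S.le x y :=
  Finset.mem_filter

lemma mem_bag {x y : α} : y ∈ S.bag x ↔ y ∈ S.carrier ∧ S.le y x ∧ S.le x y :=
  Finset.mem_filter

lemma minSet_subset_carrier : S.minSet ⊆ S.carrier := Finset.filter_subset _ _

lemma mem_bag_self {v : α} (hv : v ∈ S.carrier) : v ∈ S.bag v :=
  mem_bag.2 ⟨hv, S.le_refl v hv, S.le_refl v hv⟩

lemma mem_bag_iff_le {v x : α} (hv : v ∈ S.minSet) : x ∈ S.bag v ↔ S.le x v :=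
  ⟨fun h => (mem_bag.1 h).2.1,
    fun h => mem_bag.2 ⟨(S.mem_of_le h).1, h, (mem_minSet.1 hv).2 x h⟩⟩

lemma ext_of_le_iff (hc : S.carrier = T.carrier) (hle : ∀ x y, S.le x y ↔ T.le x y) :
    S = T := by
  obtain ⟨cS, leS, _, _, _⟩ := S
  obtain ⟨cT, leT, _, _, _⟩ := T
  obtain rfl : cS = cT := hc
  obtain rfl : leS = leT := funext₂ fun x y => propext (hle x y)
  rfl

lemma bag_subset_minSet {v : α} (hv : v ∈ S.minSet) : S.bag v ⊆ S.minSet := by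
  intro x hx
  obtain ⟨hxS, hxv, -⟩ := mem_bag.1 hx
  exact mem_minSet.2 ⟨hxS, fun y hyx =>
    S.le_trans hxv ((mem_minSet.1 hv).2 y (S.le_trans hyx hxv))⟩

end Basic

section Isos

variable {A B : FinPre α} {f : α → α}

lemma le_iff_of_mem_isos (hf : f ∈ Isos A B) {x y : α} (hx : x ∈ A.carrier)
    (hy : y ∈ A.carrier) : A.le x y ↔ B.le (f x) (f y) :=
  hf.2.1 x hx y hy

lemma apply_eq_self_of_mem_isos (hf : f ∈ Isos A B) {x : α} (hx : x ∉ A.carrier) : f x = x :=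
  hf.2.2 x hx

lemma lt_iff_of_mem_isos (hf : f ∈ Isos A B) {x y : α} (hx : x ∈ A.carrier)
    (hy : y ∈ A.carrier) : A.lt x y ↔ B.lt (f x) (f y) := by
  rw [lt, lt, le_iff_of_mem_isos hf hx hy, le_iff_of_mem_isos hf hy hx]

lemma equiv_iff_of_mem_isos (hf : f ∈ Isos A B) {x y : α} (hx : x ∈ A.carrier)
    (hy : y ∈ A.carrier) : A.equiv x y ↔ B.equiv (f x) (f y) := by
  rw [equiv, equiv, le_iff_of_mem_isos hf hx hy, le_iff_of_mem_isos hf hy hx]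

lemma mem_minSet_iff_of_mem_isos (hf : f ∈ Isos A B) {x : α} (hx : x ∈ A.carrier) :
    x ∈ A.minSet ↔ f x ∈ B.minSet := by
  rw [mem_minSet, mem_minSet, and_iff_right hx,
    and_iff_right (Finset.mem_coe.1 (hf.1.mapsTo hx))]
  constructor
  · intro hmin y' hy'
    obtain ⟨y, hy, rfl⟩ := hf.1.surjOn (B.mem_of_le hy').1
    exact (le_iff_of_mem_isos hf hx hy).1 (hmin y ((le_iff_of_mem_isos hf hy hx).2 hy'))
  · intro hmin y hy
    have hyA := (A.mem_of_le hy).1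
    exact (le_iff_of_mem_isos hf hx hyA).2 (hmin _ ((le_iff_of_mem_isos hf hyA hx).1 hy))

lemma exists_invOn_mem_isos [Nonempty α] (hf : f ∈ Isos A B) :
    ∃ f' ∈ Isos B A, Set.InvOn f' f A.carrier B.carrier := by
  have hinv : Set.InvOn (B.carrier.piecewise (Function.invFunOn f A.carrier) id) f
      A.carrier B.carrier := by
    have h := hf.1.invOn_invFunOn
    refine ⟨fun x hx => ?_, fun y hy => ?_⟩
    · rw [Finset.piecewise_eq_of_mem _ _ _ (hf.1.mapsTo hx)]
      exact h.1 hx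
    · rw [Finset.piecewise_eq_of_mem _ _ _ hy]
      exact h.2 hy
  refine ⟨_, ⟨hf.1.symm hinv.symm, fun x hx y hy => ?_, fun x hx => ?_⟩, hinv⟩
  · have hmaps := (hf.1.symm hinv.symm).mapsTo
    rw [le_iff_of_mem_isos hf (hmaps hx) (hmaps hy), hinv.2 hx, hinv.2 hy]
  · exact Finset.piecewise_eq_of_notMem _ _ _ hx

lemma connOn_image (hf : f ∈ Isos A B) {I : Set α} (hI : I ⊆ A.carrier) (h : A.ConnOn I) :
    B.ConnOn (f '' I) := by
  rintro _ ⟨x, hx, rfl⟩ _ ⟨y, hy, rfl⟩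
  refine Relation.ReflTransGen.lift f (fun a b ⟨ha, hb, hab⟩ => ⟨Set.mem_image_of_mem f ha,
    Set.mem_image_of_mem f hb, ?_⟩) x y (h x hx y hy)
  rwa [← le_iff_of_mem_isos hf (hI ha) (hI hb), ← le_iff_of_mem_isos hf (hI hb) (hI ha)]

lemma isCC_image (hf : f ∈ Isos A B) {S I : Set α} (hS : S ⊆ A.carrier) (h : A.IsCC S I) :
    B.IsCC (f '' S) (f '' I) := by
  obtain ⟨hne, hIS, hconn, hclosed⟩ := h
  refine ⟨hne.image f, Set.image_mono hIS, connOn_image hf (hIS.trans hS) hconn, ?_⟩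
  rintro _ ⟨x, hx, rfl⟩ _ ⟨y, hy, rfl⟩ hxy
  have hxA : x ∈ A.carrier := hS (hIS hx)
  refine Set.mem_image_of_mem f (hclosed x hx y hy ?_)
  rwa [le_iff_of_mem_isos hf hxA (hS hy), le_iff_of_mem_isos hf (hS hy) hxA]

lemma finite_isos (A B : FinPre α) : (Isos A B).Finite := by
  refine ((A.carrier.pi fun _ => B.carrier).image
    fun F x => if h : x ∈ A.carrier then F x h else x).finite_toSet.subset fun f hf => ?_
  refine Finset.mem_coe.2 (Finset.mem_image.2 ⟨fun x _ => f x,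
    Finset.mem_pi.2 fun x hx => hf.1.mapsTo hx, funext fun x => ?_⟩)
  by_cases hx : x ∈ A.carrier
  · simp only [dif_pos hx]
  · simp only [dif_neg hx, apply_eq_self_of_mem_isos hf hx]

variable (A B) in
noncomputable def isoFinset : Finset (α → α) := (finite_isos A B).toFinset

lemma mem_isoFinset : f ∈ isoFinset A B ↔ f ∈ Isos A B := Set.Finite.mem_toFinset _

variable (A B) in
lemma card_isoFinset : (isoFinset A B).card = pairing A B := by
  rw [pairing, isoFinset, Nat.card_eq_card_finite_toFinset]

end Isos

section Restrict

variable [DecidableEq α] {S : FinPre α}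

lemma mem_below {Y : Finset α} {x : α} :
    x ∈ S.below Y ↔ x ∈ S.carrier ∧ x ∉ Y ∧ ∃ y ∈ Y, S.le x y := by
  simp only [below, Finset.mem_filter, Finset.mem_sdiff, and_assoc]

lemma mem_circSet {Y : Finset α} : Y ∈ S.circSet ↔ Y ⊆ S.carrier ∧ S.Circ Y := by
  simp only [circSet, Finset.mem_filter, Finset.mem_powerset]

lemma restrict_carrier_of_subset {Y : Finset α} (hY : Y ⊆ S.carrier) :
    (S.restrict Y).carrier = Y :=
  Finset.inter_eq_right.2 hY

lemma mem_minSet_restrict {Y : Finset α} {x : α} (hx : x ∈ S.minSet) (hxY : x ∈ Y) :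
    x ∈ (S.restrict Y).minSet :=
  mem_minSet.2 ⟨Finset.mem_inter.2 ⟨minSet_subset_carrier hx, hxY⟩,
    fun y hy => ⟨(mem_minSet.1 hx).2 y hy.1, hxY, hy.2.1⟩⟩

lemma restrict_le_iff {Y : Finset α} {x y : α} (hx : x ∈ Y) (hy : y ∈ Y) :
    (S.restrict Y).le x y ↔ S.le x y :=
  ⟨fun h => h.1, fun h => ⟨h, hx, hy⟩⟩

lemma le_iff_of_mem_isos_restrict {A B : FinPre α} {f : α → α} {Y : Finset α}
    (hf : f ∈ Isos (A.restrict Y) B) {x y : α} (hx : x ∈ A.carrier) (hy : y ∈ A.carrier)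
    (hxY : x ∈ Y) (hyY : y ∈ Y) :
    A.le x y ↔ B.le (f x) (f y) := by
  rw [← le_iff_of_mem_isos hf (Finset.mem_inter.2 ⟨hx, hxY⟩) (Finset.mem_inter.2 ⟨hy, hyY⟩),
    restrict_le_iff hxY hyY]

end Restrict

section Pieces

variable [DecidableEq α] {A B C : FinPre α} {f g h : α → α}

noncomputable def preimageIn (A : FinPre α) (f : α → α) (P : Finset α) : Finset α :=
  A.carrier.filter fun x => f x ∈ P

lemma mem_preimageIn {P : Finset α} {x : α} :
    x ∈ A.preimageIn f P ↔ x ∈ A.carrier ∧ f x ∈ P :=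
  Finset.mem_filter

lemma image_preimageIn (hf : f ∈ Isos A B) {P : Finset α} (hP : P ⊆ B.carrier) :
    (A.preimageIn f P).image f = P := by
  ext y
  simp only [Finset.mem_image, mem_preimageIn]
  constructor
  · rintro ⟨x, ⟨-, hx⟩, rfl⟩
    exact hx
  · intro hy
    obtain ⟨x, hx, rfl⟩ := hf.1.surjOn (hP hy)
    exact ⟨x, ⟨hx, hy⟩, rfl⟩

lemma image_sdiff_preimageIn (hf : f ∈ Isos A B) {P : Finset α} :
    (A.carrier \ A.preimageIn f P).image f = B.carrier \ P := by
  ext y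
  simp only [Finset.mem_image, Finset.mem_sdiff, mem_preimageIn]
  constructor
  · rintro ⟨x, ⟨hx, hxP⟩, rfl⟩
    exact ⟨hf.1.mapsTo hx, fun h => hxP ⟨hx, h⟩⟩
  · rintro ⟨hy, hyP⟩
    obtain ⟨x, hx, rfl⟩ := hf.1.surjOn hy
    exact ⟨x, ⟨hx, fun h => hyP h.2⟩, rfl⟩

lemma piecewise_mem_isos_restrict (hf : f ∈ Isos A B) {S : Finset α} (hS : S ⊆ A.carrier) :
    S.piecewise f id ∈ Isos (A.restrict S) (B.restrict (S.image f)) := by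
  have hSB : S.image f ⊆ B.carrier := by
    intro y hy
    obtain ⟨x, hx, rfl⟩ := Finset.mem_image.1 hy
    exact hf.1.mapsTo (hS hx)
  have heq : Set.EqOn (S.piecewise f id) f S := fun x hx => Finset.piecewise_eq_of_mem _ _ _ hx
  refine ⟨?_, fun x hx y hy => ?_, fun x hx => ?_⟩
  · rw [restrict_carrier_of_subset hS, restrict_carrier_of_subset hSB, Finset.coe_image]
    exact (hf.1.injOn.mono hS).bijOn_image.congr heq.symm
  · rw [restrict_carrier_of_subset hS] at hx hy
    rw [heq hx, heq hy, restrict_le_iff hx hy,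
      restrict_le_iff (Finset.mem_image_of_mem f hx) (Finset.mem_image_of_mem f hy)]
    exact le_iff_of_mem_isos hf (hS hx) (hS hy)
  · rw [restrict_carrier_of_subset hS] at hx
    exact Finset.piecewise_eq_of_notMem _ _ _ hx

lemma piecewise_mem_isos {Y P : Finset α} (hY : Y ⊆ A.carrier) (hP : P ⊆ B.carrier)
    (hg : g ∈ Isos (A.restrict Y) (B.restrict P))
    (hh : h ∈ Isos (A.restrict (A.carrier \ Y)) (B.restrict (B.carrier \ P)))
    (hcross : ∀ x ∈ Y, ∀ y ∈ A.carrier \ Y,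
      (A.le x y ↔ B.le (g x) (h y)) ∧ (A.le y x ↔ B.le (h y) (g x))) :
    Y.piecewise g h ∈ Isos A B := by
  have hgY : Set.BijOn g Y P := by
    simpa only [restrict_carrier_of_subset hY, restrict_carrier_of_subset hP] using hg.1
  have hhZ : Set.BijOn h ↑(A.carrier \ Y) ↑(B.carrier \ P) := by
    simpa only [restrict_carrier_of_subset Finset.sdiff_subset] using hh.1
  have hpg : Set.EqOn g (Y.piecewise g h) Y := fun x hx =>
    (Finset.piecewise_eq_of_mem _ _ _ hx).symm
  have hph : Set.EqOn h (Y.piecewise g h) ↑(A.carrier \ Y) := fun x hx =>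
    (Finset.piecewise_eq_of_notMem _ _ _ (Finset.mem_sdiff.1 hx).2).symm
  have hle : ∀ x y, x ∈ A.carrier → y ∈ A.carrier →
      (A.le x y ↔ B.le (Y.piecewise g h x) (Y.piecewise g h y)) := by
    intro x y hx hy
    by_cases hxY : x ∈ Y <;> by_cases hyY : y ∈ Y
    · rw [← hpg hxY, ← hpg hyY, le_iff_of_mem_isos_restrict hg hx hy hxY hyY,
        restrict_le_iff (hgY.mapsTo hxY) (hgY.mapsTo hyY)]
    · rw [← hpg hxY, ← hph (Finset.mem_sdiff.2 ⟨hy, hyY⟩)]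
      exact (hcross x hxY y (Finset.mem_sdiff.2 ⟨hy, hyY⟩)).1
    · rw [← hph (Finset.mem_sdiff.2 ⟨hx, hxY⟩), ← hpg hyY]
      exact (hcross y hyY x (Finset.mem_sdiff.2 ⟨hx, hxY⟩)).2
    · have hxZ := Finset.mem_sdiff.2 ⟨hx, hxY⟩
      have hyZ := Finset.mem_sdiff.2 ⟨hy, hyY⟩
      rw [← hph hxZ, ← hph hyZ, le_iff_of_mem_isos_restrict hh hx hy hxZ hyZ,
        restrict_le_iff (hhZ.mapsTo hxZ) (hhZ.mapsTo hyZ)]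
  refine ⟨?_, fun x hx y hy => hle x y hx hy, fun x hx => ?_⟩
  · have hinj : Set.InjOn (Y.piecewise g h) (↑Y ∪ ↑(A.carrier \ Y)) := by
      refine (Set.injOn_union (Finset.disjoint_coe.2 Finset.disjoint_sdiff)).2
        ⟨hgY.injOn.congr hpg, hhZ.injOn.congr hph, fun x hx y hy hxy => ?_⟩
      have hgx : g x ∈ P := hgY.mapsTo hx
      rw [hpg hx, hxy, ← hph hy] at hgx
      exact (Finset.mem_sdiff.1 (hhZ.mapsTo hy)).2 hgx
    have := (hgY.congr hpg).union (hhZ.congr hph) hinj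
    rwa [← Finset.coe_union, ← Finset.coe_union, Finset.union_sdiff_of_subset hY,
      Finset.union_sdiff_of_subset hP] at this
  · have hxY : x ∉ Y := fun h => hx (hY h)
    rw [Finset.piecewise_eq_of_notMem _ _ _ hxY]
    exact apply_eq_self_of_mem_isos hh fun h => hx (Finset.mem_inter.1 h).1

lemma piecewise_piecewise_restrict (hf : f ∈ Isos A B) (Y : Finset α) :
    Y.piecewise (Y.piecewise f id) ((A.carrier \ Y).piecewise f id) = f := by
  funext x
  by_cases hxY : x ∈ Y
  · simp only [Finset.piecewise_eq_of_mem _ _ _ hxY]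
  · by_cases hx : x ∈ A.carrier
    · simp only [Finset.piecewise_eq_of_notMem _ _ _ hxY,
        Finset.piecewise_eq_of_mem _ _ _ (Finset.mem_sdiff.2 ⟨hx, hxY⟩)]
    · simp only [Finset.piecewise_eq_of_notMem _ _ _ hxY, Finset.mem_sdiff, hx, false_and,
        not_false_eq_true, Finset.piecewise_eq_of_notMem, id, apply_eq_self_of_mem_isos hf hx]

lemma piecewise_piecewise_left {Y : Finset α} (hg : g ∈ Isos (A.restrict Y) B) :
    Y.piecewise (Y.piecewise g h) id = g := by
  funext x
  by_cases hxY : x ∈ Y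
  · simp only [Finset.piecewise_eq_of_mem _ _ _ hxY]
  · rw [Finset.piecewise_eq_of_notMem _ _ _ hxY, id,
      apply_eq_self_of_mem_isos hg fun h => hxY (Finset.mem_inter.1 h).2]

lemma piecewise_piecewise_right {Y : Finset α}
    (hh : h ∈ Isos (A.restrict (A.carrier \ Y)) B) :
    (A.carrier \ Y).piecewise (Y.piecewise g h) id = h := by
  funext x
  by_cases hxZ : x ∈ A.carrier \ Y
  · rw [Finset.piecewise_eq_of_mem _ _ _ hxZ,
      Finset.piecewise_eq_of_notMem _ _ _ (Finset.mem_sdiff.1 hxZ).2]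
  · rw [Finset.piecewise_eq_of_notMem _ _ _ hxZ, id,
      apply_eq_self_of_mem_isos hh fun h => hxZ (Finset.mem_inter.1 h).2]

lemma preimageIn_piecewise {Y : Finset α} (hY : Y ⊆ A.carrier)
    (hg : g ∈ Isos (A.restrict Y) B) (hh : h ∈ Isos (A.restrict (A.carrier \ Y)) C)
    (hBC : Disjoint B.carrier C.carrier) :
    A.preimageIn (Y.piecewise g h) B.carrier = Y := by
  ext x
  rw [mem_preimageIn]
  by_cases hxY : x ∈ Y
  · rw [Finset.piecewise_eq_of_mem _ _ _ hxY]
    exact ⟨fun _ => hxY, fun _ =>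
      ⟨hY hxY, hg.1.mapsTo (Finset.mem_inter.2 ⟨hY hxY, hxY⟩)⟩⟩
  · rw [Finset.piecewise_eq_of_notMem _ _ _ hxY]
    refine ⟨fun ⟨hx, hhx⟩ => absurd hhx (Finset.disjoint_right.1 hBC ?_),
      fun h => absurd h hxY⟩
    exact hh.1.mapsTo (Finset.mem_inter.2 ⟨hx, Finset.mem_sdiff.2 ⟨hx, hxY⟩⟩)

end Pieces

section CircIso

variable [DecidableEq α] {A B : FinPre α} {f : α → α}

lemma image_below (hf : f ∈ Isos A B) {Y : Finset α} (hY : Y ⊆ A.carrier) :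
    (A.below Y).image f = B.below (Y.image f) := by
  ext z
  simp only [Finset.mem_image, mem_below]
  constructor
  · rintro ⟨x, ⟨hx, hxY, y, hy, hxy⟩, rfl⟩
    refine ⟨hf.1.mapsTo hx, fun ⟨x', hx', hfx⟩ => hxY ?_, f y, ⟨y, hy, rfl⟩,
      (le_iff_of_mem_isos hf hx (hY hy)).1 hxy⟩
    rwa [← hf.1.injOn (hY hx') hx hfx]
  · rintro ⟨hz, hzY, _, ⟨y, hy, rfl⟩, hzy⟩
    obtain ⟨x, hx, rfl⟩ := hf.1.surjOn hz
    exact ⟨x, ⟨hx, fun h => hzY ⟨x, h, rfl⟩, y, hy,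
      (le_iff_of_mem_isos hf hx (hY hy)).2 hzy⟩, rfl⟩

lemma image_setOf_lt_below (hf : f ∈ Isos A B) {Y : Finset α} (hY : Y ⊆ A.carrier) :
    f '' {x | x ∈ A.carrier ∧ ∀ y ∈ A.below Y, A.lt y x}
      = {x | x ∈ B.carrier ∧ ∀ y ∈ B.below (Y.image f), B.lt y x} := by
  rw [← image_below hf hY]
  ext z
  simp only [Set.mem_image, Set.mem_ofPred_eq, Finset.mem_image, forall_exists_index, and_imp,
    forall_apply_eq_imp_iff₂]
  constructor
  · rintro ⟨x, ⟨hx, hlt⟩, rfl⟩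
    exact ⟨hf.1.mapsTo hx, fun y hy =>
      (lt_iff_of_mem_isos hf (mem_below.1 hy).1 hx).1 (hlt y hy)⟩
  · rintro ⟨hz, hlt⟩
    obtain ⟨x, hx, rfl⟩ := hf.1.surjOn hz
    exact ⟨x, ⟨hx, fun y hy =>
      (lt_iff_of_mem_isos hf (mem_below.1 hy).1 hx).2 (hlt y hy)⟩, rfl⟩

lemma circ_image (hf : f ∈ Isos A B) {Y : Finset α} (hY : Y ⊆ A.carrier) (hc : A.Circ Y) :
    B.Circ (Y.image f) := by
  obtain ⟨hup, w, hwb, hwmin, hequiv, hcc⟩ := hc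
  have hw : w ∈ A.carrier := (mem_below.1 hwb).1
  refine ⟨?_, f w, ?_, (mem_minSet_iff_of_mem_isos hf hw).1 hwmin, ?_, ?_⟩
  · intro z hz z' hzz'
    obtain ⟨x, hx, rfl⟩ := Finset.mem_image.1 hz
    obtain ⟨x', hx', rfl⟩ := hf.1.surjOn (B.mem_of_le hzz').2
    exact Finset.mem_image_of_mem f (hup x hx x' ((le_iff_of_mem_isos hf (hY hx) hx').2 hzz'))
  · rw [← image_below hf hY]
    exact Finset.mem_image_of_mem f hwb
  · rw [← image_below hf hY]
    intro z hz
    obtain ⟨x, hx, rfl⟩ := Finset.mem_image.1 hz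
    exact (equiv_iff_of_mem_isos hf (mem_below.1 hx).1 hw).1 (hequiv x hx)
  · rw [Finset.coe_image, ← image_setOf_lt_below hf hY]
    exact isCC_image hf (fun x hx => hx.1) hcc

lemma preimageIn_mem_circSet (hf : f ∈ Isos A B) {P : Finset α} (hP : P ⊆ B.carrier)
    (hc : B.Circ P) : A.preimageIn f P ∈ A.circSet := by
  obtain ⟨w, -⟩ := hc.2
  have : Nonempty α := ⟨w⟩
  obtain ⟨f', hf', hinv⟩ := exists_invOn_mem_isos hf
  have himage : A.preimageIn f P = P.image f' := by
    ext x
    rw [mem_preimageIn, Finset.mem_image]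
    constructor
    · rintro ⟨hx, hfx⟩
      exact ⟨f x, hfx, hinv.1 hx⟩
    · rintro ⟨y, hy, rfl⟩
      exact ⟨hf'.1.mapsTo (hP hy), by rwa [hinv.2 (hP hy)]⟩
  refine mem_circSet.2 ⟨Finset.filter_subset _ _, ?_⟩
  rw [himage]
  exact circ_image hf' hP hc

end CircIso

section Graft

variable [DecidableEq α] {T' T'' : FinPre α} {v : α}

lemma graft_eq (hd : Disjoint T'.carrier T''.carrier) (hv : v ∈ T''.carrier) :
    T'.graft T'' v = T'.graftAux T'' v hd hv :=
  dif_pos ⟨hd, hv⟩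

lemma graft_carrier (hd : Disjoint T'.carrier T''.carrier) (hv : v ∈ T''.carrier) :
    (T'.graft T'' v).carrier = T'.carrier ∪ T''.carrier := by
  rw [graft_eq hd hv]
  rfl

lemma graft_le (hd : Disjoint T'.carrier T''.carrier) (hv : v ∈ T''.carrier) {x y : α} :
    (T'.graft T'' v).le x y ↔ T'.le x y ∨ T''.le x y ∨ (T''.le x v ∧ y ∈ T'.carrier) := by
  rw [graft_eq hd hv]
  rfl

lemma graft_le_iff_of_mem_left (hd : Disjoint T'.carrier T''.carrier) (hv : v ∈ T''.carrier)
    {x y : α} (hx : x ∈ T'.carrier) : (T'.graft T'' v).le x y ↔ T'.le x y := by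
  rw [graft_le hd hv]
  refine ⟨?_, Or.inl⟩
  rintro (h | h | ⟨h, -⟩)
  · exact h
  · exact absurd (T''.mem_of_le h).1 (Finset.disjoint_left.1 hd hx)
  · exact absurd (T''.mem_of_le h).1 (Finset.disjoint_left.1 hd hx)

lemma graft_le_iff_of_mem_right (hd : Disjoint T'.carrier T''.carrier) (hv : v ∈ T''.carrier)
    {x y : α} (hx : x ∈ T''.carrier) (hy : y ∈ T''.carrier) :
    (T'.graft T'' v).le x y ↔ T''.le x y := by
  rw [graft_le hd hv]
  refine ⟨?_, fun h => Or.inr (Or.inl h)⟩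
  rintro (h | h | ⟨-, h⟩)
  · exact absurd (T'.mem_of_le h).1 (Finset.disjoint_right.1 hd hx)
  · exact h
  · exact absurd h (Finset.disjoint_right.1 hd hy)

lemma graft_le_iff_of_mem_right_of_mem_left (hd : Disjoint T'.carrier T''.carrier)
    (hv : v ∈ T''.carrier) {x y : α} (hx : x ∈ T''.carrier) (hy : y ∈ T'.carrier) :
    (T'.graft T'' v).le x y ↔ T''.le x v := by
  rw [graft_le hd hv]
  refine ⟨?_, fun h => Or.inr (Or.inr ⟨h, hy⟩)⟩
  rintro (h | h | ⟨h, -⟩)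
  · exact absurd (T'.mem_of_le h).1 (Finset.disjoint_right.1 hd hx)
  · exact absurd (T''.mem_of_le h).2 (Finset.disjoint_left.1 hd hy)
  · exact h

lemma not_graft_le_of_mem_left_of_mem_right (hd : Disjoint T'.carrier T''.carrier)
    (hv : v ∈ T''.carrier) {x y : α} (hx : x ∈ T'.carrier) (hy : y ∈ T''.carrier) :
    ¬ (T'.graft T'' v).le x y := by
  rw [graft_le_iff_of_mem_left hd hv hx]
  exact fun h => Finset.disjoint_left.1 hd (T'.mem_of_le h).2 hy

lemma restrict_graft_left (hd : Disjoint T'.carrier T''.carrier) (hv : v ∈ T''.carrier) :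
    (T'.graft T'' v).restrict T'.carrier = T' := by
  refine ext_of_le_iff ?_ fun x y => ⟨fun ⟨h, hx, _⟩ => (graft_le_iff_of_mem_left hd hv hx).1 h,
    fun h => ⟨(graft_le_iff_of_mem_left hd hv (T'.mem_of_le h).1).2 h, T'.mem_of_le h⟩⟩
  rw [restrict_carrier_of_subset (by rw [graft_carrier hd hv]; exact Finset.subset_union_left)]

lemma restrict_graft_right (hd : Disjoint T'.carrier T''.carrier) (hv : v ∈ T''.carrier) :
    (T'.graft T'' v).restrict T''.carrier = T'' := by
  refine ext_of_le_iff ?_ fun x y =>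
    ⟨fun ⟨h, hx, hy⟩ => (graft_le_iff_of_mem_right hd hv hx hy).1 h, fun h =>
      ⟨(graft_le_iff_of_mem_right hd hv (T''.mem_of_le h).1 (T''.mem_of_le h).2).2 h,
        T''.mem_of_le h⟩⟩
  rw [restrict_carrier_of_subset (by rw [graft_carrier hd hv]; exact Finset.subset_union_right)]

lemma graft_carrier_sdiff_left (hd : Disjoint T'.carrier T''.carrier) (hv : v ∈ T''.carrier) :
    (T'.graft T'' v).carrier \ T'.carrier = T''.carrier := by
  rw [graft_carrier hd hv, Finset.union_sdiff_cancel_left hd]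

lemma mem_minSet_graft (hd : Disjoint T'.carrier T''.carrier) (hv : v ∈ T''.minSet) :
    v ∈ (T'.graft T'' v).minSet := by
  have hvc := minSet_subset_carrier hv
  refine mem_minSet.2 ⟨by rw [graft_carrier hd hvc]; exact Finset.mem_union_right _ hvc,
    fun y hyv => ?_⟩
  have hy := ((T'.graft T'' v).mem_of_le hyv).1
  rw [graft_carrier hd hvc, Finset.mem_union] at hy
  rcases hy with hy | hy
  · exact absurd hyv (not_graft_le_of_mem_left_of_mem_right hd hvc hy hvc)
  · rw [graft_le_iff_of_mem_right hd hvc hy hvc] at hyv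
    rw [graft_le_iff_of_mem_right hd hvc hvc hy]
    exact (mem_minSet.1 hv).2 y hyv

lemma mem_below_graft_left (hd : Disjoint T'.carrier T''.carrier) (hv : v ∈ T''.carrier)
    (hT' : T'.carrier.Nonempty) {x : α} :
    x ∈ (T'.graft T'' v).below T'.carrier ↔ x ∈ T''.carrier ∧ T''.le x v := by
  rw [mem_below, graft_carrier hd hv, Finset.mem_union]
  constructor
  · rintro ⟨hx | hx, hxT', y, hy, hxy⟩
    · exact absurd hx hxT'
    · exact ⟨hx, (graft_le_iff_of_mem_right_of_mem_left hd hv hx hy).1 hxy⟩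
  · rintro ⟨hx, hxv⟩
    obtain ⟨y, hy⟩ := hT'
    exact ⟨Or.inr hx, Finset.disjoint_right.1 hd hx, y, hy,
      (graft_le_iff_of_mem_right_of_mem_left hd hv hx hy).2 hxv⟩

lemma circ_graft (hd : Disjoint T'.carrier T''.carrier) (hT' : T'.Connected)
    (hv : v ∈ T''.minSet) : (T'.graft T'' v).Circ T'.carrier := by
  have hvc := minSet_subset_carrier hv
  have hbelow (x : α) := mem_below_graft_left hd hvc hT'.1 (x := x)
  refine ⟨fun x hx z hxz => (T'.mem_of_le ((graft_le_iff_of_mem_left hd hvc hx).1 hxz)).2,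
    v, (hbelow v).2 ⟨hvc, T''.le_refl v hvc⟩, mem_minSet_graft hd hv, fun x hx => ?_, ?_⟩
  · obtain ⟨hxc, hxv⟩ := (hbelow x).1 hx
    rw [equiv, graft_le_iff_of_mem_right hd hvc hxc hvc, graft_le_iff_of_mem_right hd hvc hvc hxc]
    exact ⟨hxv, (mem_minSet.1 hv).2 x hxv⟩
  refine ⟨hT'.1, fun x hx => ⟨?_, fun y hy => ?_⟩, fun x hx y hy => ?_, ?_⟩
  · rw [graft_carrier hd hvc]
    exact Finset.mem_union_left _ hx
  · obtain ⟨hyc, hyv⟩ := (hbelow y).1 hy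
    exact ⟨(graft_le_iff_of_mem_right_of_mem_left hd hvc hyc hx).2 hyv,
      not_graft_le_of_mem_left_of_mem_right hd hvc hx hyc⟩
  · refine Relation.ReflTransGen.mono (fun a b ⟨ha, hb, hab⟩ => ⟨ha, hb, ?_⟩) x y
      (hT'.2 x hx y hy)
    rwa [graft_le_iff_of_mem_left hd hvc ha, graft_le_iff_of_mem_left hd hvc hb]
  · rintro x hx y ⟨hyc, hylt⟩ hxy
    rw [graft_carrier hd hvc, Finset.mem_union] at hyc
    refine hyc.resolve_right fun hy => ?_
    rcases hxy with h | h
    · exact not_graft_le_of_mem_left_of_mem_right hd hvc hx hy h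
    · have hyb := (hbelow y).2 ⟨hy, (graft_le_iff_of_mem_right_of_mem_left hd hvc hy hx).1 h⟩
      exact (hylt y hyb).2 (hylt y hyb).1

end Graft

section LePairs

noncomputable def lePairs (S : FinPre α) : Finset (α × α) :=
  (S.carrier ×ˢ S.carrier).filter fun p => S.le p.1 p.2

lemma mem_lePairs {S : FinPre α} {p : α × α} : p ∈ S.lePairs ↔ S.le p.1 p.2 := by
  rw [lePairs, Finset.mem_filter, Finset.mem_product]
  exact ⟨fun h => h.2, fun h => ⟨S.mem_of_le h, h⟩⟩

lemma card_lePairs_eq_of_mem_isos {A B : FinPre α} {f : α → α} (hf : f ∈ Isos A B) :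
    A.lePairs.card = B.lePairs.card := by
  refine Finset.card_nbij (Prod.map f f) (fun p hp => ?_) (fun p hp q hq hpq => ?_) fun q hq => ?_
  · have hp' := mem_lePairs.1 hp
    exact mem_lePairs.2 ((le_iff_of_mem_isos hf (A.mem_of_le hp').1 (A.mem_of_le hp').2).1 hp')
  · obtain ⟨hp1, hp2⟩ := A.mem_of_le (mem_lePairs.1 hp)
    obtain ⟨hq1, hq2⟩ := A.mem_of_le (mem_lePairs.1 hq)
    obtain ⟨h1, h2⟩ := Prod.mk.inj hpq
    exact Prod.ext (hf.1.injOn hp1 hq1 h1) (hf.1.injOn hp2 hq2 h2)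
  · have hq' := mem_lePairs.1 hq
    obtain ⟨x, hx, hx'⟩ := hf.1.surjOn (B.mem_of_le hq').1
    obtain ⟨y, hy, hy'⟩ := hf.1.surjOn (B.mem_of_le hq').2
    refine ⟨(x, y), mem_lePairs.2 ?_, Prod.ext hx' hy'⟩
    rw [le_iff_of_mem_isos hf hx hy, hx', hy']
    exact hq'

variable [DecidableEq α] {T' T'' : FinPre α} {v : α}

lemma lePairs_graft (hd : Disjoint T'.carrier T''.carrier) (hv : v ∈ T''.minSet) :
    (T'.graft T'' v).lePairs = T'.lePairs ∪ T''.lePairs ∪ T''.bag v ×ˢ T'.carrier := by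
  ext ⟨x, y⟩
  simp only [Finset.mem_union, mem_lePairs, Finset.mem_product, mem_bag_iff_le hv,
    graft_le hd (minSet_subset_carrier hv), or_assoc]

lemma card_lePairs_graft (hd : Disjoint T'.carrier T''.carrier) (hv : v ∈ T''.minSet) :
    (T'.graft T'' v).lePairs.card
      = T'.lePairs.card + T''.lePairs.card + (T''.bag v).card * T'.carrier.card := by
  have hprod (S : FinPre α) : S.lePairs ⊆ S.carrier ×ˢ S.carrier := Finset.filter_subset _ _
  have hbag : T''.bag v ⊆ T''.carrier := Finset.filter_subset _ _
  rw [lePairs_graft hd hv, Finset.card_union_of_disjoint, Finset.card_union_of_disjoint,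
    Finset.card_product]
  · exact (Finset.disjoint_product.2 (Or.inl hd)).mono (hprod T') (hprod T'')
  · refine Finset.disjoint_union_left.2 ⟨?_, ?_⟩
    · exact (Finset.disjoint_product.2 (Or.inl (hd.mono_right hbag))).mono_left (hprod T')
    · exact (Finset.disjoint_product.2 (Or.inr hd.symm)).mono (hprod T'')
        (Finset.product_subset_product_left hbag)

lemma card_bag_eq_of_mem_isos_graft (hd : Disjoint T'.carrier T''.carrier)
    (hT' : T'.carrier.Nonempty) {T : FinPre α} {v' : α} {f f' : α → α}
    (hv : v ∈ T''.minSet) (hv' : v' ∈ T''.minSet)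
    (hf : f ∈ Isos T (T'.graft T'' v)) (hf' : f' ∈ Isos T (T'.graft T'' v')) :
    (T''.bag v).card = (T''.bag v').card := by
  have h := (card_lePairs_eq_of_mem_isos hf).symm.trans (card_lePairs_eq_of_mem_isos hf')
  rw [card_lePairs_graft hd hv, card_lePairs_graft hd hv', add_right_inj] at h
  exact Nat.eq_of_mul_eq_mul_right (Finset.card_pos.2 hT') h

end LePairs

section Coproduct

variable [DecidableEq α] {T T' T'' : FinPre α} {Y : Finset α} {v w : α} {f g h : α → α}

lemma le_iff_le_of_mem_below (hY : T.Circ Y) (hw : w ∈ T.below Y) {x y : α}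
    (hx : x ∈ T.carrier) (hxY : x ∉ Y) (hy : y ∈ Y) : T.le x y ↔ T.le x w := by
  obtain ⟨-, w₀, -, -, hequiv, -, hYS, -⟩ := hY
  refine ⟨fun hxy => ?_, fun hxw => T.le_trans hxw ((hYS hy).2 w hw).1⟩
  exact T.le_trans (hequiv x (mem_below.2 ⟨hx, hxY, y, hy, hxy⟩)).1 (hequiv w hw).2

lemma mem_minSet_of_mem_below (hY : T.Circ Y) (hw : w ∈ T.below Y) : w ∈ T.minSet := by
  obtain ⟨-, w₀, -, hw₀, hequiv, -⟩ := hY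
  have hww₀ := (hequiv w hw).1
  refine mem_minSet.2 ⟨(mem_below.1 hw).1, fun y hyw => ?_⟩
  exact T.le_trans hww₀ ((mem_minSet.1 hw₀).2 y (T.le_trans hyw hww₀))

lemma piecewise_mem_isos_graft_iff (hd : Disjoint T'.carrier T''.carrier)
    (hY : Y ∈ T.circSet) (hw : w ∈ T.below Y) (hg : g ∈ Isos (T.restrict Y) T')
    (hh : h ∈ Isos (T.restrict (T.carrier \ Y)) T'') (hv : v ∈ T''.minSet) :
    Y.piecewise g h ∈ Isos T (T'.graft T'' v) ↔ v ∈ T''.bag (h w) := by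
  obtain ⟨hYT, hc⟩ := mem_circSet.1 hY
  have hvc := minSet_subset_carrier hv
  obtain ⟨hwT, hwY, -⟩ := mem_below.1 hw
  have hwZ : w ∈ T.carrier \ Y := Finset.mem_sdiff.2 ⟨hwT, hwY⟩
  have hgT' : ∀ x ∈ Y, g x ∈ T'.carrier := fun x hx =>
    hg.1.mapsTo (Finset.mem_inter.2 ⟨hYT hx, hx⟩)
  have hhT'' : ∀ y ∈ T.carrier \ Y, h y ∈ T''.carrier := fun y hy =>
    hh.1.mapsTo (Finset.mem_inter.2 ⟨(Finset.mem_sdiff.1 hy).1, hy⟩)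
  have hcross : ∀ x ∈ Y, ∀ y ∈ T.carrier \ Y, T.le y x ↔ T''.le (h y) (h w) := by
    intro x hx y hy
    obtain ⟨hyT, hyY⟩ := Finset.mem_sdiff.1 hy
    rw [le_iff_le_of_mem_below hc hw hyT hyY hx]
    exact le_iff_of_mem_isos_restrict hh hyT hwT hy hwZ
  rw [mem_bag]
  constructor
  · intro hf
    obtain ⟨-, -, -, -, -, ⟨x, hx⟩, -⟩ := hc
    have hwx := (le_iff_of_mem_isos hf hwT (hYT hx)).1
      ((hcross x hx w hwZ).2 (T''.le_refl _ (hhT'' w hwZ)))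
    rw [Finset.piecewise_eq_of_notMem _ _ _ hwY, Finset.piecewise_eq_of_mem _ _ _ hx,
      graft_le_iff_of_mem_right_of_mem_left hd hvc (hhT'' w hwZ) (hgT' x hx)] at hwx
    exact ⟨hvc, (mem_minSet.1 hv).2 _ hwx, hwx⟩
  · rintro ⟨-, hvhw, hhwv⟩
    have hg' : g ∈ Isos (T.restrict Y) ((T'.graft T'' v).restrict T'.carrier) := by
      rwa [restrict_graft_left hd hvc]
    have hh' : h ∈ Isos (T.restrict (T.carrier \ Y))
        ((T'.graft T'' v).restrict ((T'.graft T'' v).carrier \ T'.carrier)) := by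
      rwa [graft_carrier_sdiff_left hd hvc, restrict_graft_right hd hvc]
    refine piecewise_mem_isos hYT (by rw [graft_carrier hd hvc]; exact Finset.subset_union_left)
      hg' hh' fun x hx y hy => ⟨?_, ?_⟩
    · exact iff_of_false (fun hxy => (Finset.mem_sdiff.1 hy).2 (hc.1 x hx y hxy))
        (not_graft_le_of_mem_left_of_mem_right hd hvc (hgT' x hx) (hhT'' y hy))
    · rw [hcross x hx y hy,
        graft_le_iff_of_mem_right_of_mem_left hd hvc (hhT'' y hy) (hgT' x hx)]
      exact ⟨fun h' => T''.le_trans h' hhwv, fun h' => T''.le_trans h' hvhw⟩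

lemma card_filter_piecewise_mem_isos_graft (hd : Disjoint T'.carrier T''.carrier)
    (hT' : T'.carrier.Nonempty) (hY : Y ∈ T.circSet) (hg : g ∈ Isos (T.restrict Y) T')
    (hh : h ∈ Isos (T.restrict (T.carrier \ Y)) T'') (hv : v ∈ T''.minSet)
    (hf : f ∈ Isos T (T'.graft T'' v)) :
    (T''.minSet.filter fun u => Y.piecewise g h ∈ Isos T (T'.graft T'' u)).card
      = (T''.bag v).card := by
  obtain ⟨w, hw, -⟩ := (mem_circSet.1 hY).2.2
  obtain ⟨hwT, hwY, -⟩ := mem_below.1 hw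
  have hwZ : w ∈ T.carrier \ Y := Finset.mem_sdiff.2 ⟨hwT, hwY⟩
  have hu : h w ∈ T''.minSet :=
    (mem_minSet_iff_of_mem_isos hh (Finset.mem_inter.2 ⟨hwT, hwZ⟩)).1
      (mem_minSet_restrict (mem_minSet_of_mem_below (mem_circSet.1 hY).2 hw) hwZ)
  have hglue (u : α) (hu : u ∈ T''.minSet) := piecewise_mem_isos_graft_iff hd hY hw hg hh hu
  have hfiber : (T''.minSet.filter fun u => Y.piecewise g h ∈ Isos T (T'.graft T'' u))
      = T''.bag (h w) := by
    ext u
    rw [Finset.mem_filter]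
    refine ⟨fun ⟨hu', hglued⟩ => (hglue u hu').1 hglued, fun hub => ?_⟩
    have hu' := bag_subset_minSet hu hub
    exact ⟨hu', (hglue u hu').2 hub⟩
  rw [hfiber]
  exact card_bag_eq_of_mem_isos_graft hd hT' hu hv
    ((hglue _ hu).2 (mem_bag_self (minSet_subset_carrier hu))) hf

lemma piecewise_mem_isos_restrict_preimageIn_left (hd : Disjoint T'.carrier T''.carrier)
    (hv : v ∈ T''.carrier) (hf : f ∈ Isos T (T'.graft T'' v)) :
    (T.preimageIn f T'.carrier).piecewise f id
      ∈ Isos (T.restrict (T.preimageIn f T'.carrier)) T' := by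
  have := piecewise_mem_isos_restrict hf (S := T.preimageIn f T'.carrier)
    (Finset.filter_subset _ _)
  rwa [image_preimageIn hf (by rw [graft_carrier hd hv]; exact Finset.subset_union_left),
    restrict_graft_left hd hv] at this

lemma piecewise_mem_isos_restrict_preimageIn_right (hd : Disjoint T'.carrier T''.carrier)
    (hv : v ∈ T''.carrier) (hf : f ∈ Isos T (T'.graft T'' v)) :
    (T.carrier \ T.preimageIn f T'.carrier).piecewise f id
      ∈ Isos (T.restrict (T.carrier \ T.preimageIn f T'.carrier)) T'' := by
  have := piecewise_mem_isos_restrict hf (S := T.carrier \ T.preimageIn f T'.carrier)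
    Finset.sdiff_subset
  rwa [image_sdiff_preimageIn hf, graft_carrier_sdiff_left hd hv, restrict_graft_right hd hv]
    at this

end Coproduct

section Counting

variable [DecidableEq α] {T T' T'' : FinPre α}

lemma card_sigma_isoFinset_graft (hd : Disjoint T'.carrier T''.carrier) (hT' : T'.Connected) :
    (T''.minSet.sigma fun v => isoFinset T (T'.graft T'' v)).card
      = (T.circSet.sigma fun Y =>
          (isoFinset (T.restrict Y) T' ×ˢ isoFinset (T.restrict (T.carrier \ Y)) T'').sigma
            fun gh => T''.minSet.filter fun v =>
              Y.piecewise gh.1 gh.2 ∈ Isos T (T'.graft T'' v)).card := by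
  refine Finset.card_nbij'
    (fun p => ⟨T.preimageIn p.2 T'.carrier, ((T.preimageIn p.2 T'.carrier).piecewise p.2 id,
      (T.carrier \ T.preimageIn p.2 T'.carrier).piecewise p.2 id), p.1⟩)
    (fun q => ⟨q.2.2, q.1.piecewise q.2.1.1 q.2.1.2⟩) ?_ ?_ ?_ ?_
  · rintro ⟨v, f⟩ hp
    obtain ⟨hv, hf⟩ := Finset.mem_sigma.1 hp
    rw [mem_isoFinset] at hf
    have hvc := minSet_subset_carrier hv
    refine Finset.mem_sigma.2 ⟨preimageIn_mem_circSet hf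
      (by rw [graft_carrier hd hvc]; exact Finset.subset_union_left) (circ_graft hd hT' hv),
      Finset.mem_sigma.2 ⟨Finset.mem_product.2 ⟨mem_isoFinset.2 ?_, mem_isoFinset.2 ?_⟩,
        Finset.mem_filter.2 ⟨hv, ?_⟩⟩⟩
    · exact piecewise_mem_isos_restrict_preimageIn_left hd hvc hf
    · exact piecewise_mem_isos_restrict_preimageIn_right hd hvc hf
    · rwa [piecewise_piecewise_restrict hf]
  · rintro ⟨Y, ⟨g, h⟩, v⟩ hq
    obtain ⟨hv, hglued⟩ := Finset.mem_filter.1 (Finset.mem_sigma.1 (Finset.mem_sigma.1 hq).2).2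
    exact Finset.mem_sigma.2 ⟨hv, mem_isoFinset.2 hglued⟩
  · rintro ⟨v, f⟩ hp
    dsimp only
    rw [piecewise_piecewise_restrict (mem_isoFinset.1 (Finset.mem_sigma.1 hp).2)]
  · rintro ⟨Y, ⟨g, h⟩, v⟩ hq
    obtain ⟨hY, hq⟩ := Finset.mem_sigma.1 hq
    obtain ⟨hg, hh⟩ := Finset.mem_product.1 (Finset.mem_sigma.1 hq).1
    rw [mem_isoFinset] at hg hh
    dsimp only
    rw [preimageIn_piecewise (mem_circSet.1 hY).1 hg hh hd, piecewise_piecewise_left hg,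
      piecewise_piecewise_right hh]

lemma sum_pairing_graft (hd : Disjoint T'.carrier T''.carrier) (hT' : T'.Connected) {v : α}
    {f : α → α} (hv : v ∈ T''.minSet) (hf : f ∈ Isos T (T'.graft T'' v)) :
    ∑ u ∈ T''.minSet, pairing T (T'.graft T'' u)
      = (T''.bag v).card * ∑ Y ∈ T.circSet,
          pairing (T.restrict Y) T' * pairing (T.restrict (T.carrier \ Y)) T'' := by
  have h := card_sigma_isoFinset_graft (T := T) hd hT'
  simp only [Finset.card_sigma, card_isoFinset] at h
  rw [h, Finset.mul_sum]
  refine Finset.sum_congr rfl fun Y hY => ?_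
  rw [Finset.sum_const_nat fun gh hgh => card_filter_piecewise_mem_isos_graft hd hT'.1 hY
      (mem_isoFinset.1 (Finset.mem_product.1 hgh).1)
      (mem_isoFinset.1 (Finset.mem_product.1 hgh).2) hv hf,
    Finset.card_product, card_isoFinset, card_isoFinset, mul_comm]

end Counting

end FinPre

theorem delta_pairing_preorder_general {α : Type*} [DecidableEq α] (T T' T'' : FinPre α)
    (hT' : T'.Connected)
    (hd : Disjoint T'.carrier T''.carrier)
    (hne : (T''.minSet.filter
      (fun v => (FinPre.Isos T (FinPre.graft T' T'' v)).Nonempty)).Nonempty) :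
    ∃ n : ℕ, 0 < n
      ∧ (∀ v ∈ T''.minSet.filter
            (fun v => (FinPre.Isos T (FinPre.graft T' T'' v)).Nonempty),
          (T''.bag v).card = n)
      ∧ ((T.minSet.card : ℚ))⁻¹ * ∑ Y ∈ T.circSet,
            (FinPre.pairing (T.restrict Y) T' : ℚ)
              * (FinPre.pairing (T.restrict (T.carrier \ Y)) T'' : ℚ)
          = (1 / ((n : ℚ) * (T.minSet.card : ℚ))) * ∑ v ∈ T''.minSet,
            (FinPre.pairing T (FinPre.graft T' T'' v) : ℚ) := by
  obtain ⟨v, hv'⟩ := hne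
  obtain ⟨hv, f, hf⟩ := Finset.mem_filter.1 hv'
  have hpos : 0 < (T''.bag v).card :=
    Finset.card_pos.2 ⟨v, FinPre.mem_bag_self (FinPre.minSet_subset_carrier hv)⟩
  refine ⟨(T''.bag v).card, hpos, fun u hu => ?_, ?_⟩
  · obtain ⟨hu, f', hf'⟩ := Finset.mem_filter.1 hu
    exact FinPre.card_bag_eq_of_mem_isos_graft hd hT'.1 hu hv hf' hf
  · rw [← Nat.cast_sum, FinPre.sum_pairing_graft hd hT' hv hf]
    push_cast
    field_simp

/-- If the set of bags `C' = {v̄ : v ∈ min(T''), T ≅ T' ↘_v T''}` is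
nonempty, then all these bags have the same cardinality `n > 0`, and
`⟨δ(T), T' ⊗ T''⟩ = (1/(n|min(T)|)) ⟨T, T' ▷ T''⟩` where
`T' ▷ T'' = Σ_{v ∈ min(T'')} T' ↘_v T''`. -/
theorem delta_pairing_preorder {α : Type*} [DecidableEq α] (T T' T'' : FinPre α)
    (hT : T.Connected) (hT' : T'.Connected) (hT'' : T''.Connected)
    (hd : Disjoint T'.carrier T''.carrier)
    (hne : (T''.minSet.filter
      (fun v => (FinPre.Isos T (FinPre.graft T' T'' v)).Nonempty)).Nonempty) :
    ∃ n : ℕ, 0 < n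
      ∧ (∀ v ∈ T''.minSet.filter
            (fun v => (FinPre.Isos T (FinPre.graft T' T'' v)).Nonempty),
          (T''.bag v).card = n)
      ∧ ((T.minSet.card : ℚ))⁻¹ * ∑ Y ∈ T.circSet,
            (FinPre.pairing (T.restrict Y) T' : ℚ)
              * (FinPre.pairing (T.restrict (T.carrier \ Y)) T'' : ℚ)
          = (1 / ((n : ℚ) * (T.minSet.card : ℚ))) * ∑ v ∈ T''.minSet,
            (FinPre.pairing T (FinPre.graft T' T'' v) : ℚ) :=
  delta_pairing_preorder_general T T' T'' hT' hd hne
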